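/- For every (a,b) ∈ ℝ², the sequence L ↦ I(a,b;L) converges to √(a² + b²) as L → ∞. -/

import Mathlib

open Real

/-- The Riemannian approximation `I(a,b;L)` of `√(a² + b²)` built from the angles
`θ_k = πk/(2L)`, `k = 0, …, L−1`. -/
noncomputable def Ifun (L : ℕ) (a b : ℝ) : ℝ :=
  (∑ k ∈ Finset.range L,
      (|a * Real.cos (π * (k : ℝ) / (2 * (L : ℝ))) + b * Real.sin (π * (k : ℝ) / (2 * (L : ℝ)))| +
       |b * Real.cos (π * (k : ℝ) / (2 * (L : ℝ))) - a * Real.sin (π * (k : ℝ) / (2 * (L : ℝ)))|)) /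
  (∑ k ∈ Finset.range L,
      (Real.cos (π * (k : ℝ) / (2 * (L : ℝ))) + Real.sin (π * (k : ℝ) / (2 * (L : ℝ)))))

/-!
Write `(a, b) = r (cos φ, sin φ)`. The `k`-th summand of the numerator of `I(a,b;L)` is
`r g(θ_k - φ)` with `g θ = |cos θ| + |sin θ|`, and the denominator is `S(0)`, where
`S(ψ) = ∑_k g(θ_k - ψ)`; so `I(a,b;L) = r S(φ) / S(0)`. Since `g` is `π/2`-periodic, `S` is
periodic with period `π/(2L)`, the spacing of the `θ_k`; since `g` is `2`-Lipschitz, `S` is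
`2L`-Lipschitz. Hence `S` oscillates by at most `2L · π/(2L) = π`, while `S(0) ≥ L` because
`g ≥ 1`. Therefore `|I(a,b;L) - r| ≤ r π / L`.
-/

open Finset Function

theorem Function.Periodic.sum_range_mul_sub {M : Type*} [AddCommMonoid M] {g : ℝ → M}
    {d : ℝ} {n : ℕ} (hg : Periodic g (n * d)) :
    Periodic (fun ψ => ∑ k ∈ range n, g (k * d - ψ)) d := by
  intro ψ
  cases n with
  | zero => simp
  | succ m =>
    dsimp only
    rw [sum_range_succ', sum_range_succ]
    congr 1
    · refine sum_congr rfl fun k _ => ?_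
      push_cast
      ring_nf
    · convert (hg (-(ψ + d))).symm using 2 <;> push_cast <;> ring

theorem Function.Periodic.abs_sub_le_mul_period {f : ℝ → ℝ} {d K : ℝ} (hf : Periodic f d)
    (hd : 0 < d) (hK : ∀ x y, |f x - f y| ≤ K * |x - y|) (x y : ℝ) :
    |f x - f y| ≤ K * d := by
  have hK0 : 0 ≤ K := by simpa using (abs_nonneg _).trans (hK 1 0)
  obtain ⟨x', hx', hfx⟩ := hf.exists_mem_Ico hd x y
  rw [hfx]
  refine (hK x' y).trans (mul_le_mul_of_nonneg_left ?_ hK0)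
  rw [abs_of_nonneg (by linarith [hx'.1])]
  linarith [hx'.2]

noncomputable def l1NormUnit (θ : ℝ) : ℝ := |cos θ| + |sin θ|

theorem l1NormUnit_periodic : Periodic l1NormUnit (π / 2) := by
  intro θ
  simp only [l1NormUnit, cos_add_pi_div_two, sin_add_pi_div_two, abs_neg]
  ring

theorem one_le_l1NormUnit (θ : ℝ) : 1 ≤ l1NormUnit θ := by
  unfold l1NormUnit
  nlinarith [sin_sq_add_cos_sq θ, abs_cos_le_one θ, abs_sin_le_one θ, sq_abs (cos θ),
    sq_abs (sin θ), abs_nonneg (cos θ), abs_nonneg (sin θ)]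

theorem abs_l1NormUnit_sub_le (x y : ℝ) : |l1NormUnit x - l1NormUnit y| ≤ 2 * |x - y| := by
  have hcos := (abs_abs_sub_abs_le_abs_sub (cos x) (cos y)).trans (abs_cos_sub_cos_le x y)
  have hsin := (abs_abs_sub_abs_le_abs_sub (sin x) (sin y)).trans (abs_sin_sub_sin_le x y)
  calc |l1NormUnit x - l1NormUnit y|
      = |(|cos x| - |cos y|) + (|sin x| - |sin y|)| := by unfold l1NormUnit; ring_nf
    _ ≤ |(|cos x| - |cos y|)| + |(|sin x| - |sin y|)| := abs_add_le _ _
    _ ≤ 2 * |x - y| := by linarith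

theorem abs_add_abs_eq_mul_l1NormUnit {r : ℝ} (hr : 0 ≤ r) (φ θ : ℝ) :
    |r * cos φ * cos θ + r * sin φ * sin θ| + |r * sin φ * cos θ - r * cos φ * sin θ| =
      r * l1NormUnit (θ - φ) := by
  have hcos : r * cos φ * cos θ + r * sin φ * sin θ = r * cos (θ - φ) := by
    rw [cos_sub]; ring
  have hsin : r * sin φ * cos θ - r * cos φ * sin θ = -(r * sin (θ - φ)) := by
    rw [sin_sub]; ring
  rw [hcos, hsin, abs_neg, abs_mul, abs_mul, abs_of_nonneg hr, l1NormUnit, mul_add]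

theorem exists_sqrt_mul_cos_sin (a b : ℝ) :
    ∃ φ, √(a ^ 2 + b ^ 2) * cos φ = a ∧ √(a ^ 2 + b ^ 2) * sin φ = b := by
  have hnorm : ‖(⟨a, b⟩ : ℂ)‖ = √(a ^ 2 + b ^ 2) := by
    rw [Complex.norm_def, Complex.normSq_mk, sq, sq]
  exact ⟨Complex.arg ⟨a, b⟩, hnorm ▸ Complex.norm_mul_cos_arg _,
    hnorm ▸ Complex.norm_mul_sin_arg _⟩

noncomputable def l1NormUnitSum (L : ℕ) (ψ : ℝ) : ℝ :=
  ∑ k ∈ range L, l1NormUnit (k * (π / (2 * L)) - ψ)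

theorem l1NormUnitSum_periodic {L : ℕ} (hL : L ≠ 0) :
    Periodic (l1NormUnitSum L) (π / (2 * L)) :=
  Periodic.sum_range_mul_sub <| by convert l1NormUnit_periodic using 1; field_simp

theorem abs_l1NormUnitSum_sub_le_mul (L : ℕ) (ψ ψ' : ℝ) :
    |l1NormUnitSum L ψ - l1NormUnitSum L ψ'| ≤ 2 * L * |ψ - ψ'| := by
  unfold l1NormUnitSum
  rw [← sum_sub_distrib]
  calc _ ≤ ∑ k ∈ range L, |l1NormUnit (k * (π / (2 * L)) - ψ) -
          l1NormUnit (k * (π / (2 * L)) - ψ')| := abs_sum_le_sum_abs _ _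
    _ ≤ ∑ _k ∈ range L, 2 * |ψ - ψ'| := sum_le_sum fun k _ => by
          simpa [abs_sub_comm ψ'] using abs_l1NormUnit_sub_le (k * (π / (2 * L)) - ψ)
            (k * (π / (2 * L)) - ψ')
    _ = 2 * L * |ψ - ψ'| := by simp [mul_comm, mul_left_comm]

theorem abs_l1NormUnitSum_sub_le {L : ℕ} (hL : L ≠ 0) (ψ ψ' : ℝ) :
    |l1NormUnitSum L ψ - l1NormUnitSum L ψ'| ≤ π := by
  have h := (l1NormUnitSum_periodic hL).abs_sub_le_mul_period (by positivity)
    (abs_l1NormUnitSum_sub_le_mul L) ψ ψ'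
  rwa [show 2 * (L : ℝ) * (π / (2 * L)) = π by field_simp] at h

theorem le_l1NormUnitSum (L : ℕ) (ψ : ℝ) : (L : ℝ) ≤ l1NormUnitSum L ψ := by
  simpa [l1NormUnitSum] using card_nsmul_le_sum (range L) _ 1 fun k _ => one_le_l1NormUnit _

theorem Ifun_mul_cos_mul_sin {r : ℝ} (hr : 0 ≤ r) (L : ℕ) (φ : ℝ) :
    Ifun L (r * cos φ) (r * sin φ) = r * l1NormUnitSum L φ / l1NormUnitSum L 0 := by
  have hθ (k : ℕ) : π * k / (2 * L) = k * (π / (2 * L)) := by ring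
  unfold Ifun l1NormUnitSum
  simp only [hθ]
  congr 1
  · rw [mul_sum]
    exact sum_congr rfl fun k _ => abs_add_abs_eq_mul_l1NormUnit hr φ _
  · refine sum_congr rfl fun k hk => ?_
    have hkL : (k : ℝ) ≤ L := by exact_mod_cast (mem_range.mp hk).le
    have h0 : 0 ≤ k * (π / (2 * L)) := by positivity
    have hπ : k * (π / (2 * L)) ≤ π / 2 := by
      calc _ ≤ L * (π / (2 * L)) := by gcongr
        _ = π / 2 := by field_simp [(Nat.zero_lt_of_lt (mem_range.mp hk)).ne']
    rw [sub_zero, l1NormUnit, abs_of_nonneg (cos_nonneg_of_mem_Icc ⟨by linarith [pi_pos], hπ⟩),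
      abs_of_nonneg (sin_nonneg_of_nonneg_of_le_pi h0 (by linarith [pi_pos]))]

theorem abs_Ifun_mul_cos_mul_sin_sub_le {r : ℝ} (hr : 0 ≤ r) {L : ℕ} (hL : L ≠ 0) (φ : ℝ) :
    |Ifun L (r * cos φ) (r * sin φ) - r| ≤ r * π / L := by
  have hS := le_l1NormUnitSum L 0
  have hS0 : 0 < l1NormUnitSum L 0 := lt_of_lt_of_le (by positivity) hS
  calc |Ifun L (r * cos φ) (r * sin φ) - r|
      = r * |l1NormUnitSum L φ - l1NormUnitSum L 0| / l1NormUnitSum L 0 := by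
        rw [Ifun_mul_cos_mul_sin hr, div_sub' hS0.ne', mul_comm (l1NormUnitSum L 0), ← mul_sub,
          abs_div, abs_mul, abs_of_nonneg hr, abs_of_pos hS0]
    _ ≤ r * π / L := by
        gcongr
        exact abs_l1NormUnitSum_sub_le hL φ 0

theorem stmt3 (a b : ℝ) :
    Filter.Tendsto (fun L : ℕ => Ifun L a b) Filter.atTop
      (nhds (Real.sqrt (a ^ 2 + b ^ 2))) := by
  obtain ⟨φ, ha, hb⟩ := exists_sqrt_mul_cos_sin a b
  have hr := sqrt_nonneg (a ^ 2 + b ^ 2)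
  generalize √(a ^ 2 + b ^ 2) = r at ha hb hr ⊢
  subst ha hb
  rw [← tendsto_sub_nhds_zero_iff]
  refine squeeze_zero_norm' ?_ (tendsto_const_div_atTop_nhds_zero_nat (r * π))
  filter_upwards [Filter.eventually_ne_atTop 0] with L hL
  exact abs_Ifun_mul_cos_mul_sin_sub_le hr hL φ
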